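/- arXiv:1703.10917 — 2 statements merged into one kernel-verified Lean document; each statement's English description precedes it below -/
import Mathlib

section
/- Let V be a 2g-dimensional vector space over 𝔽₂ with a nondegenerate alternating bilinear form, and suppose c₁, ..., c_{2g} is a basis of V such that ⟨c_i, c_j⟩ = 1 for all i ≠ j. Define t_i ∈ End(V) by t_i(v) = ⟨v, c_i⟩c_i. Then the set {t_i : 1 ≤ i ≤ 2g} ∪ {[t_i, t_j] : 1 ≤ i < j ≤ 2g} is a basis of the Lie algebra 𝔰𝔭(V) over 𝔽₂. -/
/-!
Let `d` be the `B`-dual basis of `c`, so `⟨d_k, c_j⟩ = δ_kj`, and write endomorphisms as matrices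
from the basis `d` to the basis `c`. Since `t_i (d_l) = δ_li c_i`, the map `t_i` becomes the unit
matrix `E_ii`; as `⟨c_i, c_j⟩ = 1` and we are in characteristic `2`, the commutator `[t_i, t_j]`
becomes `E_ij + E_ji`. The entry `(k, l)` of the matrix of `u` is `⟨d_k, u d_l⟩`, so `𝔰𝔭(V)`
(the `B`-self-adjoint maps, since `B` is symmetric) becomes the space of symmetric matrices, of
which the `E_ii` and `E_ij + E_ji` (`i < j`) form the standard basis.
-/

/-- The symplectic Lie algebra of a bilinear form `B` over `𝔽₂`, as a submodule
of endomorphisms: those `u` with `B (u v) w + B v (u w) = 0` for all `v, w`. -/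
def spSubmodule {V : Type*} [AddCommGroup V] [Module (ZMod 2) V]
    (B : V →ₗ[ZMod 2] V →ₗ[ZMod 2] ZMod 2) :
    Submodule (ZMod 2) (V →ₗ[ZMod 2] V) where
  carrier := {u | ∀ v w : V, B (u v) w + B v (u w) = 0}
  add_mem' := by
    intro u u' hu hu' v w
    have h1 := hu v w
    have h2 := hu' v w
    simp only [LinearMap.add_apply, map_add, LinearMap.add_apply] at *
    linear_combination h1 + h2
  zero_mem' := by intro v w; simp
  smul_mem' := by
    intro a u hu v w
    have h := hu v w
    simp only [LinearMap.smul_apply, map_smul, LinearMap.smul_apply, smul_eq_mul] at *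
    linear_combination a * h

open Module Submodule Set

namespace Matrix

variable (R ι : Type*) [CommRing R]

def symmetricSubmodule : Submodule R (Matrix ι ι R) where
  carrier := {M | M.IsSymm}
  add_mem' := IsSymm.add
  zero_mem' := isSymm_zero
  smul_mem' k _ hM := hM.smul k

variable {R ι} in
theorem mem_symmetricSubmodule {M : Matrix ι ι R} : M ∈ symmetricSubmodule R ι ↔ M.IsSymm :=
  Iff.rfl

variable [LinearOrder ι]

def symmSingle : ι ⊕ {p : ι × ι // p.1 < p.2} → Matrix ι ι R :=
  Sum.elim (fun i => single i i 1) (fun p => single p.1.1 p.1.2 1 + single p.1.2 p.1.1 1)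

def upperCoords : Matrix ι ι R →ₗ[R] (ι ⊕ {p : ι × ι // p.1 < p.2} → R) where
  toFun M := Sum.elim (fun i => M i i) (fun p => M p.1.1 p.1.2)
  map_add' _ _ := by ext (_ | _) <;> rfl
  map_smul' _ _ := by ext (_ | _) <;> rfl

variable {R ι}

theorem upperCoords_symmSingle (x : ι ⊕ {p : ι × ι // p.1 < p.2}) :
    upperCoords R ι (symmSingle R ι x) = Pi.single x 1 := by
  ext y
  rcases x with i | ⟨⟨i, j⟩, hij⟩ <;> rcases y with k | ⟨⟨k, l⟩, hkl⟩ <;>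
    simp [upperCoords, symmSingle, single_apply, Pi.single_apply] <;> grind

theorem isSymm_symmSingle (x : ι ⊕ {p : ι × ι // p.1 < p.2}) : (symmSingle R ι x).IsSymm := by
  rcases x with i | ⟨⟨i, j⟩, hij⟩
  · exact IsSymm.ext fun k l => by simp [symmSingle, single_apply, and_comm]
  · exact IsSymm.ext fun k l => by simp [symmSingle, single_apply, and_comm, add_comm]

theorem IsSymm.eq_zero_of_upperCoords_eq_zero {M : Matrix ι ι R} (hM : M.IsSymm)
    (h : upperCoords R ι M = 0) : M = 0 := by
  have hdiag (i : ι) : M i i = 0 := congr_fun h (.inl i)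
  have hupper {i j : ι} (hij : i < j) : M i j = 0 := congr_fun h (.inr ⟨(i, j), hij⟩)
  ext i j
  rcases lt_trichotomy i j with hij | rfl | hij
  · exact hupper hij
  · exact hdiag i
  · rw [← hM.apply, hupper hij, zero_apply]

variable [Fintype ι]

theorem linearIndependent_symmSingle : LinearIndependent R (symmSingle R ι) := by
  refine LinearIndependent.of_comp (upperCoords R ι) ?_
  convert (Pi.basisFun R (ι ⊕ {p : ι × ι // p.1 < p.2})).linearIndependent
  ext1 x
  rw [Function.comp_apply, upperCoords_symmSingle, Pi.basisFun_apply]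

theorem span_symmSingle : span R (range (symmSingle R ι)) = symmetricSubmodule R ι := by
  have hle : span R (range (symmSingle R ι)) ≤ symmetricSubmodule R ι :=
    span_le.2 (range_subset_iff.2 isSymm_symmSingle)
  refine le_antisymm hle fun M hM => ?_
  set N := ∑ x, upperCoords R ι M x • symmSingle R ι x
  have hN : N ∈ span R (range (symmSingle R ι)) :=
    sum_mem fun x _ => smul_mem _ _ (subset_span (mem_range_self x))
  have hMN : M - N = 0 := by
    refine (IsSymm.sub hM (hle hN)).eq_zero_of_upperCoords_eq_zero ?_
    simp_rw [N, map_sub, map_sum, map_smul, upperCoords_symmSingle, ← Pi.single_smul, smul_eq_mul,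
      mul_one, Finset.univ_sum_single, sub_self]
  rwa [sub_eq_zero.1 hMN]

end Matrix

theorem LinearMap.smulRight_mul_smulRight {R V : Type*} [CommSemiring R] [AddCommMonoid V]
    [Module R V] (f g : V →ₗ[R] R) (v w : V) :
    smulRight f v * smulRight g w = f w • smulRight g v := by
  ext x
  simp [smul_smul, mul_comm]

namespace LinearMap

variable {R V ι : Type*} [CommRing R] [AddCommGroup V] [Module R V] [DecidableEq ι]

def IsDualBasis (B : V →ₗ[R] V →ₗ[R] R) (d c : Basis ι R V) : Prop :=
  ∀ i j, B (d i) (c j) = if j = i then 1 else 0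

variable {B : V →ₗ[R] V →ₗ[R] R} {d c : Basis ι R V}

theorem IsDualBasis.repr_apply (h : IsDualBasis B d c) (x : V) (k : ι) :
    c.repr x k = B (d k) x :=
  congr($(c.ext (f₁ := c.coord k) fun j => by simp [h k j, Finsupp.single_apply]) x)

variable [Fintype ι]

theorem IsDualBasis.toMatrix_smulRight_flip (h : IsDualBasis B d c) (i j : ι) :
    toMatrix d c (smulRight (B.flip (c j)) (c i)) = Matrix.single i j 1 := by
  ext k l
  by_cases hjl : j = l
  · subst hjl
    simp [toMatrix_apply, h j j, Matrix.single_apply, Finsupp.single_apply]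
  · simp [toMatrix_apply, h l j, hjl]

end LinearMap

theorem LinearMap.IsDualBasis.mem_spSubmodule_iff {V ι : Type*} [AddCommGroup V]
    [Module (ZMod 2) V] [Fintype ι] [DecidableEq ι] {B : V →ₗ[ZMod 2] V →ₗ[ZMod 2] ZMod 2}
    {d c : Basis ι (ZMod 2) V} (hB : B.IsAlt) (h : IsDualBasis B d c) (u : V →ₗ[ZMod 2] V) :
    u ∈ spSubmodule B ↔ (LinearMap.toMatrix d c u).IsSymm := by
  have hsymm (x y : V) : B x y = B y x := by rw [← hB.neg, ZMod.neg_eq_self_mod_two]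
  have hentry (k l : ι) : LinearMap.toMatrix d c u k l = B (d k) (u (d l)) := by
    rw [LinearMap.toMatrix_apply, h.repr_apply]
  change (∀ v w, B (u v) w + B v (u w) = 0) ↔ _
  simp_rw [Matrix.IsSymm.ext_iff, hentry]
  refine ⟨fun hu k l => ?_, fun hu => ?_⟩
  · rw [hsymm (d l), CharTwo.add_eq_zero.1 (hu (d k) (d l))]
  · have hzero : B ∘ₗ u + B.compl₂ u = 0 :=
      LinearMap.ext_basis d d fun k l => by simp [hsymm (u (d k)), hu l k, ZModModule.add_self]
    exact fun v w => congr($hzero v w)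

theorem basis_of_sp_from_transvection_logs_general (g : ℕ)
    {V : Type*} [AddCommGroup V] [Module (ZMod 2) V]
    (B : V →ₗ[ZMod 2] V →ₗ[ZMod 2] ZMod 2)
    (halt : ∀ v : V, B v v = 0)
    (hnondeg : ∀ v : V, (∀ w : V, B v w = 0) → v = 0)
    (c : Module.Basis (Fin (2 * g)) (ZMod 2) V)
    (hpair : ∀ i j : Fin (2 * g), i ≠ j → B (c i) (c j) = 1)
    (t : Fin (2 * g) → (V →ₗ[ZMod 2] V))
    (ht : ∀ i, t i = LinearMap.smulRight (B.flip (c i)) (c i))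
    (F : (Fin (2 * g) ⊕ {p : Fin (2 * g) × Fin (2 * g) // p.1 < p.2}) →
      (V →ₗ[ZMod 2] V))
    (hF : F = Sum.elim t (fun p => t p.1.1 * t p.1.2 - t p.1.2 * t p.1.1)) :
    (∀ i, F i ∈ spSubmodule B) ∧ LinearIndependent (ZMod 2) F ∧
      Submodule.span (ZMod 2) (Set.range F) = spSubmodule B := by
  have hB : B.Nondegenerate :=
    (LinearMap.IsAlt.isRefl halt).nondegenerate_iff_separatingLeft.2 hnondeg
  set d := LinearMap.BilinForm.dualBasis B hB c
  have hdc : B.IsDualBasis d c := LinearMap.BilinForm.apply_dualBasis_left hB c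
  have hFmat : ∀ x, LinearMap.toMatrix d c (F x) = Matrix.symmSingle (ZMod 2) _ x := by
    rintro (i | ⟨⟨i, j⟩, hij⟩)
    · simp [hF, ht, hdc.toMatrix_smulRight_flip, Matrix.symmSingle]
    · simp [hF, ht, LinearMap.smulRight_mul_smulRight, hpair _ _ hij.ne, hpair _ _ hij.ne',
        ZModModule.sub_eq_add, hdc.toMatrix_smulRight_flip, Matrix.symmSingle]
  have hspan : span (ZMod 2) (range F) = spSubmodule B := by
    ext u
    have hrange : range (Matrix.symmSingle (ZMod 2) _) = LinearMap.toMatrix d c '' range F := by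
      rw [← range_comp]
      exact congrArg range (funext hFmat).symm
    rw [hdc.mem_spSubmodule_iff halt, ← Matrix.mem_symmetricSubmodule, ← Matrix.span_symmSingle,
      hrange]
    exact (apply_mem_span_image_iff_mem_span (f := (LinearMap.toMatrix d c).toLinearMap)
      (LinearMap.toMatrix d c).injective).symm
  refine ⟨fun x => hspan ▸ subset_span (mem_range_self x), ?_, hspan⟩
  refine LinearIndependent.of_comp (LinearMap.toMatrix d c).toLinearMap ?_
  simpa only [Function.comp_def, LinearEquiv.coe_coe, hFmat] using
    Matrix.linearIndependent_symmSingle (R := ZMod 2) (ι := Fin (2 * g))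

/-- Let `V` be a `2g`-dimensional `𝔽₂`-vector space with
nondegenerate alternating form `B` and basis `c₁, ..., c_{2g}` with
`B (c i) (c j) = 1` for `i ≠ j`.  With `t i : v ↦ B v (c i) • c i`, the family
consisting of the `t i` together with the commutators `[t i, t j]` for `i < j`
is a basis of the symplectic Lie algebra `𝔰𝔭(V)`. -/
theorem basis_of_sp_from_transvection_logs (g : ℕ) (hg : 1 ≤ g)
    {V : Type*} [AddCommGroup V] [Module (ZMod 2) V]
    (B : V →ₗ[ZMod 2] V →ₗ[ZMod 2] ZMod 2)
    (halt : ∀ v : V, B v v = 0)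
    (hnondeg : ∀ v : V, (∀ w : V, B v w = 0) → v = 0)
    (c : Module.Basis (Fin (2 * g)) (ZMod 2) V)
    (hpair : ∀ i j : Fin (2 * g), i ≠ j → B (c i) (c j) = 1)
    (t : Fin (2 * g) → (V →ₗ[ZMod 2] V))
    (ht : ∀ i, t i = LinearMap.smulRight (B.flip (c i)) (c i))
    (F : (Fin (2 * g) ⊕ {p : Fin (2 * g) × Fin (2 * g) // p.1 < p.2}) →
      (V →ₗ[ZMod 2] V))
    (hF : F = Sum.elim t (fun p => t p.1.1 * t p.1.2 - t p.1.2 * t p.1.1)) :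
    (∀ i, F i ∈ spSubmodule B) ∧ LinearIndependent (ZMod 2) F ∧
      Submodule.span (ZMod 2) (Set.range F) = spSubmodule B :=
  basis_of_sp_from_transvection_logs_general g B halt hnondeg c hpair t ht F hF
end

section
/- Let V be a 2g-dimensional 𝔽₂-vector space (g ≥ 2) with nondegenerate alternating form and basis c₁,...,c_{2g} with ⟨c_i,c_j⟩ = 1 for i ≠ j. Define t_i(v) = ⟨v,c_i⟩c_i. Then the 2(2g−2) operators {[t₁,t_i] : 3 ≤ i ≤ 2g} ∪ {[t₂,t_i] : 3 ≤ i ≤ 2g} are linearly independent over 𝔽₂. -/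
/-!
Since `[t_b, t_m] c_l = ⟨c_l, c_m⟩⟨c_m, c_b⟩ c_b - ⟨c_l, c_b⟩⟨c_b, c_m⟩ c_m`, for `b ∈ {1, 2}` and
`k, m ≥ 3` the `c_k`-coordinate of `[t_b, t_m] c_l` is `-δ_{km}` if `l ≠ b` and `0` if `l = b`.
Hence, with `a'` the partner of `a` in `{1, 2}`, the functional `T ↦ -(c_k-coordinate of T c_a')`
is `1` on `[t_a, t_k]` and `0` on every other commutator of the family: the family admits a
biorthogonal system of functionals.
-/

open Module LinearMap

theorem LinearIndependent.of_biorthogonal {ι R M : Type*} [Semiring R] [AddCommMonoid M]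
    [Module R M] [DecidableEq ι] {v : ι → M} (φ : ι → M →ₗ[R] R)
    (h : ∀ i j, φ i (v j) = if i = j then 1 else 0) : LinearIndependent R v := by
  have hφv : LinearMap.pi φ ∘ v = fun j => Pi.single j 1 := by
    funext j i
    simp [h, Pi.single_apply]
  exact .of_comp (LinearMap.pi φ) (hφv ▸ Pi.linearIndependent_single_one ι R)

section

variable {R M ι : Type*} [CommRing R] [AddCommGroup M] [Module R M]

theorem lie_smulRight_flip_apply (B : M →ₗ[R] M →ₗ[R] R) (x y v : M) :
    ⁅(B.flip x).smulRight x, (B.flip y).smulRight y⁆ v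
      = (B v y * B y x) • x - (B v x * B x y) • y := by
  simp [Ring.lie_def, smul_smul]

variable [DecidableEq ι] {B : M →ₗ[R] M →ₗ[R] R} (c : Basis ι R M)
  (hB : ∀ i j, B (c i) (c j) = if i = j then 0 else 1)
include hB

theorem repr_lie_smulRight_flip_basis {j k n : ι} (l : ι) (hjn : j ≠ n) (hjk : j ≠ k) :
    c.repr (⁅(B.flip (c j)).smulRight (c j), (B.flip (c k)).smulRight (c k)⁆ (c l)) n
      = -if l ≠ j ∧ k = n then 1 else 0 := by
  simp only [lie_smulRight_flip_apply, hB, if_neg hjk, if_neg hjk.symm, mul_one, ite_smul,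
    zero_smul, one_smul, map_sub, apply_ite c.repr, map_zero, Basis.repr_self]
  split_ifs <;> simp_all

theorem linearIndependent_lie_smulRight_flip_basis {κ : Type*} {s : Fin 2 → ι}
    (hs : Function.Injective s) {f : κ → ι} (hf : Function.Injective f)
    (hsf : ∀ a m, s a ≠ f m) :
    LinearIndependent R fun p : Fin 2 × κ =>
      ⁅(B.flip (c (s p.1))).smulRight (c (s p.1)),
        (B.flip (c (f p.2))).smulRight (c (f p.2))⁆ := by
  have hs_add_one (a b : Fin 2) : s (a + 1) ≠ s b ↔ a = b := by
    rw [hs.ne_iff]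
    fin_cases a <;> fin_cases b <;> decide
  classical
  refine .of_biorthogonal (fun p => -(c.coord (f p.2) ∘ₗ applyₗ (c (s (p.1 + 1))))) ?_
  rintro ⟨a, m⟩ ⟨b, m'⟩
  simp [repr_lie_smulRight_flip_basis c hB _ (hsf b m) (hsf b m'), hs_add_one, hf.eq_iff, eq_comm]

end

/-- Let `V` be a `2g`-dimensional `𝔽₂`-space (`g ≥ 2`) with
nondegenerate alternating form `B` and basis `c₁, ..., c_{2g}` pairing to `1`
pairwise, and `t_i : v ↦ B v (c i) • c i`.  The `2(2g−2)` commutators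
`[t₁, t_i]` and `[t₂, t_i]` for `3 ≤ i ≤ 2g` are linearly independent. -/
theorem commutators_linearIndependent (g : ℕ) (hg : 2 ≤ g)
    {V : Type*} [AddCommGroup V] [Module (ZMod 2) V]
    (B : V →ₗ[ZMod 2] V →ₗ[ZMod 2] ZMod 2)
    (halt : ∀ v : V, B v v = 0)
    (c : Module.Basis (Fin (2 * g)) (ZMod 2) V)
    (hpair : ∀ i j : Fin (2 * g), i ≠ j → B (c i) (c j) = 1)
    (t : Fin (2 * g) → (V →ₗ[ZMod 2] V))
    (ht : ∀ i, t i = LinearMap.smulRight (B.flip (c i)) (c i)) :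
    LinearIndependent (ZMod 2)
      (fun p : Fin 2 × Fin (2 * g - 2) =>
        t ⟨p.1.val, by have := p.1.isLt; omega⟩ * t ⟨p.2.val + 2, by have := p.2.isLt; omega⟩
          - t ⟨p.2.val + 2, by have := p.2.isLt; omega⟩ * t ⟨p.1.val, by have := p.1.isLt; omega⟩) := by
  have hB : ∀ i j, B (c i) (c j) = if i = j then 0 else 1 := by
    intro i j
    split_ifs with h
    · exact h ▸ halt (c i)
    · exact hpair i j h
  obtain rfl : t = fun i => (B.flip (c i)).smulRight (c i) := funext ht
  simp only [← Ring.lie_def]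
  have hs : Function.Injective fun a : Fin 2 => (⟨a, by omega⟩ : Fin (2 * g)) := by
    intro a b h
    simpa [Fin.ext_iff] using h
  have hf : Function.Injective fun m : Fin (2 * g - 2) => (⟨m + 2, by omega⟩ : Fin (2 * g)) := by
    intro m m' h
    simpa [Fin.ext_iff] using h
  refine (linearIndependent_lie_smulRight_flip_basis c hB hs hf fun a m h => ?_ :)
  simp only [Fin.ext_iff] at h
  omega
end
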